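/- arXiv:1801.08425 — 5 statements merged into one kernel-verified Lean document; each statement's English description precedes it below -/
import Mathlib

section
/- For every finite simple graph G and all x, y ∈ (−1,1) and α ∈ (0,1), one has τ(G, αx + (1−α)y) ≥ τ(G,x)^α · τ(G,y)^{1−α} (logarithmic concavity), and moreover τ(G, xy) ≥ τ(G,x). -/
/-!
The convex combination `α A_G(x) + (1 - α) A_G(y)` lies in `𝒜(G, αx + (1 - α)y)` and the Hadamard
product `A_G(x) ⊙ A_G(y)` lies in `𝒜(G, xy)`, so it suffices to bound their determinants from
below. The first bound is the log-concavity of `det` on positive definite matrices, seen by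
diagonalising the pencil `a A + b B` simultaneously and applying weighted AM-GM to each
generalised eigenvalue. The second is Oppenheim's inequality `det A · ∏ B_ii ≤ det (A ⊙ B)`, as
`A_G(y)` has unit diagonal; it is proved by induction on the size: splitting off a `1 × 1` corner,
the Schur complement of `A ⊙ B` is `S_A ⊙ B₂₂ + P ⊙ S_B` with `P` positive semidefinite, and `det`
is monotone on positive semidefinite matrices.
-/

open Matrix Finset Real

/-- `M ∈ 𝒜(G,x)`: `M` is a real symmetric positive definite `V × V` matrix with
`1`s on the diagonal and value `x` at every edge of `G`. -/
def memA {V : Type*} [Fintype V] [DecidableEq V] (G : SimpleGraph V) (x : ℝ) (M : Matrix V V ℝ) : Prop :=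
  M.PosDef ∧ (∀ i, M i i = 1) ∧ ∀ i j, G.Adj i j → M i j = x

/-- `A = 𝔸_G(x)`: `A` is the determinant-maximizing matrix in `𝒜(G,x)`,
so that `τ(G,x) = A.det`. -/
def IsMaxA {V : Type*} [Fintype V] [DecidableEq V] (G : SimpleGraph V) (x : ℝ) (A : Matrix V V ℝ) : Prop :=
  memA G x A ∧ ∀ M : Matrix V V ℝ, memA G x M → M.det ≤ A.det

open scoped MatrixOrder

namespace Matrix

variable {n : Type*} [Fintype n] [DecidableEq n]

theorem IsHermitian.det_smul_one_add_smul {C : Matrix n n ℝ} (hC : C.IsHermitian) (a b : ℝ) :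
    (a • (1 : Matrix n n ℝ) + b • C).det = ∏ i, (a + b * hC.eigenvalues i) := by
  have hcfc : cfc (fun t => a + b * t) C = a • 1 + b • C := by
    rw [cfc_add .., cfc_const_mul .., cfc_id' .., cfc_const .., Algebra.algebraMap_eq_smul_one]
  rw [← hcfc, hC.cfc_eq, IsHermitian.cfc, det_map, det_diagonal]
  rfl

theorem PosDef.exists_det_smul_add_smul_eq {A B : Matrix n n ℝ} (hA : A.PosDef)
    (hB : B.PosSemidef) :
    ∃ μ : n → ℝ, (∀ i, 0 ≤ μ i) ∧ ∀ a b : ℝ, (a • A + b • B).det = A.det * ∏ i, (a + b * μ i) := by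
  set S := CFC.sqrt A
  have hS : S.IsHermitian := (nonneg_iff_posSemidef.mp (CFC.sqrt_nonneg A)).1
  have hSS : S * S = A := CFC.sqrt_mul_sqrt_self A hA.posSemidef.nonneg
  have hSdet : IsUnit S.det := (isUnit_of_mul_isUnit_left (hSS ▸ hA.isUnit)).map detMonoidHom
  set C := S⁻¹ * B * S⁻¹ with hC_def
  have hSCS : S * C * S = B := by
    rw [hC_def, mul_assoc S⁻¹ B, mul_nonsing_inv_cancel_left _ _ hSdet,
      nonsing_inv_mul_cancel_right _ _ hSdet]
  have hC : C.PosSemidef := by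
    have := hB.conjTranspose_mul_mul_same S⁻¹
    rwa [hS.inv.eq] at this
  refine ⟨hC.1.eigenvalues, hC.eigenvalues_nonneg, fun a b => ?_⟩
  have hconj : a • A + b • B = S * (a • 1 + b • C) * S := by
    rw [mul_add, add_mul, Matrix.mul_smul, Matrix.mul_smul, Matrix.smul_mul, Matrix.smul_mul,
      mul_one, hSS, hSCS]
  rw [hconj, det_mul, det_mul, mul_right_comm, ← det_mul, hSS, hC.1.det_smul_one_add_smul]

theorem PosDef.det_le_det_add {A B : Matrix n n ℝ} (hA : A.PosDef) (hB : B.PosSemidef) :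
    A.det ≤ (A + B).det := by
  obtain ⟨μ, hμ, hdet⟩ := hA.exists_det_smul_add_smul_eq hB
  have h := hdet 1 1
  simp only [one_smul, one_mul] at h
  rw [h]
  exact le_mul_of_one_le_right hA.det_pos.le
    (Finset.one_le_prod fun i _ => by linarith [hμ i])

theorem PosDef.det_rpow_mul_det_rpow_le {A B : Matrix n n ℝ} (hA : A.PosDef)
    (hB : B.PosSemidef) {t : ℝ} (ht₀ : 0 ≤ t) (ht₁ : t ≤ 1) :
    A.det ^ t * B.det ^ (1 - t) ≤ (t • A + (1 - t) • B).det := by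
  obtain ⟨μ, hμ, hdet⟩ := hA.exists_det_smul_add_smul_eq hB
  have hB_det : B.det = A.det * ∏ i, μ i := by simpa using hdet 0 1
  have hA_det := hA.det_pos
  have hμ_prod : (∏ i, μ i) ^ (1 - t) ≤ ∏ i, (t + (1 - t) * μ i) := by
    rw [← Real.finsetProd_rpow _ _ fun i _ => hμ i]
    refine Finset.prod_le_prod (fun i _ => Real.rpow_nonneg (hμ i) _) fun i _ => ?_
    simpa using Real.geom_mean_le_arith_mean2_weighted ht₀ (sub_nonneg.mpr ht₁) zero_le_one
      (hμ i) (by ring)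
  calc A.det ^ t * B.det ^ (1 - t) = A.det * (∏ i, μ i) ^ (1 - t) := by
        rw [hB_det, Real.mul_rpow hA_det.le (Finset.prod_nonneg fun i _ => hμ i), ← mul_assoc,
          ← Real.rpow_add hA_det, add_sub_cancel, Real.rpow_one]
    _ ≤ A.det * ∏ i, (t + (1 - t) * μ i) := mul_le_mul_of_nonneg_left hμ_prod hA_det.le
    _ = (t • A + (1 - t) • B).det := (hdet t (1 - t)).symm

section Blocks
variable {l m : Type*}

noncomputable def schurCompl [Fintype l] [DecidableEq l] {R : Type*} [CommRing R]
    (M : Matrix (l ⊕ m) (l ⊕ m) R) : Matrix m m R :=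
  M.toBlocks₂₂ - M.toBlocks₂₁ * M.toBlocks₁₁⁻¹ * M.toBlocks₁₂

theorem det_eq_det_toBlocks₁₁_mul_det_schurCompl [Fintype l] [Fintype m] [DecidableEq l]
    [DecidableEq m] {R : Type*} [CommRing R] {M : Matrix (l ⊕ m) (l ⊕ m) R}
    (h : IsUnit M.toBlocks₁₁.det) :
    M.det = M.toBlocks₁₁.det * M.schurCompl.det := by
  have := M.toBlocks₁₁.invertibleOfIsUnitDet h
  conv_lhs => rw [← fromBlocks_toBlocks M]
  rw [det_fromBlocks₁₁, invOf_eq_nonsing_inv, schurCompl]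

theorem IsHermitian.conjTranspose_toBlocks₁₂ {R : Type*} [Star R]
    {M : Matrix (l ⊕ m) (l ⊕ m) R} (hM : M.IsHermitian) : M.toBlocks₁₂ᴴ = M.toBlocks₂₁ := by
  ext i j
  exact hM.apply (Sum.inr i) (Sum.inl j)

theorem PosDef.toBlocks₁₁ {M : Matrix (l ⊕ m) (l ⊕ m) ℝ} (hM : M.PosDef) :
    M.toBlocks₁₁.PosDef :=
  hM.submatrix Sum.inl_injective

theorem PosDef.toBlocks₂₂ {M : Matrix (l ⊕ m) (l ⊕ m) ℝ} (hM : M.PosDef) :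
    M.toBlocks₂₂.PosDef :=
  hM.submatrix Sum.inr_injective

theorem PosDef.det_eq_det_toBlocks₁₁_mul_det_schurCompl [Fintype l] [Fintype m]
    [DecidableEq l] [DecidableEq m] {M : Matrix (l ⊕ m) (l ⊕ m) ℝ} (hM : M.PosDef) :
    M.det = M.toBlocks₁₁.det * M.schurCompl.det :=
  Matrix.det_eq_det_toBlocks₁₁_mul_det_schurCompl hM.toBlocks₁₁.det_pos.ne'.isUnit

theorem PosDef.posSemidef_toBlocks₂₁_mul_inv_mul_toBlocks₁₂ [Fintype l] [Fintype m]
    [DecidableEq l] [DecidableEq m] {M : Matrix (l ⊕ m) (l ⊕ m) ℝ} (hM : M.PosDef) :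
    (M.toBlocks₂₁ * M.toBlocks₁₁⁻¹ * M.toBlocks₁₂).PosSemidef := by
  rw [← hM.1.conjTranspose_toBlocks₁₂]
  exact hM.toBlocks₁₁.inv.posSemidef.conjTranspose_mul_mul_same _

theorem PosDef.schurCompl [Fintype l] [Fintype m] [DecidableEq l] [DecidableEq m]
    {M : Matrix (l ⊕ m) (l ⊕ m) ℝ} (hM : M.PosDef) : M.schurCompl.PosDef := by
  have := M.toBlocks₁₁.invertibleOfIsUnitDet hM.toBlocks₁₁.det_pos.ne'.isUnit
  have hblocks : fromBlocks M.toBlocks₁₁ M.toBlocks₁₂ M.toBlocks₁₂ᴴ M.toBlocks₂₂ = M := by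
    rw [hM.1.conjTranspose_toBlocks₁₂, fromBlocks_toBlocks]
  have hpsd := (PosDef.fromBlocks₁₁ M.toBlocks₁₂ M.toBlocks₂₂ hM.toBlocks₁₁).mp
    (hblocks ▸ hM.posSemidef)
  rw [hM.1.conjTranspose_toBlocks₁₂] at hpsd
  refine hpsd.posDef_iff_det_ne_zero.mpr fun h => hM.det_pos.ne' ?_
  rw [hM.det_eq_det_toBlocks₁₁_mul_det_schurCompl, Matrix.schurCompl, h, mul_zero]

theorem toBlocks₂₁_mul_inv_mul_toBlocks₁₂_apply_of_unique [Fintype l] [DecidableEq l] [Unique l]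
    {K : Type*} [Field K] (M : Matrix (l ⊕ m) (l ⊕ m) K) (i j : m) :
    (M.toBlocks₂₁ * M.toBlocks₁₁⁻¹ * M.toBlocks₁₂) i j =
      M (.inr i) (.inl default) * M (.inl default) (.inr j) / M (.inl default) (.inl default) := by
  simp [inv_subsingleton, mul_apply, Ring.inverse_eq_inv', toBlocks₁₁, toBlocks₁₂, toBlocks₂₁]
  ring

theorem schurCompl_hadamard_of_unique [Fintype l] [Fintype m] [DecidableEq l] [DecidableEq m]
    [Unique l] (A B : Matrix (l ⊕ m) (l ⊕ m) ℝ) :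
    (A ⊙ B).schurCompl = A.schurCompl ⊙ B.toBlocks₂₂ +
      (A.toBlocks₂₁ * A.toBlocks₁₁⁻¹ * A.toBlocks₁₂) ⊙ B.schurCompl := by
  ext i j
  simp only [schurCompl, add_apply, sub_apply, hadamard_apply,
    toBlocks₂₁_mul_inv_mul_toBlocks₁₂_apply_of_unique, toBlocks₂₂, of_apply]
  rcases eq_or_ne (A (.inl default) (.inl default)) 0 with hA | hA
  · simp only [hA, zero_mul, div_zero, sub_zero, add_zero]
  rcases eq_or_ne (B (.inl default) (.inl default)) 0 with hB | hB
  · simp only [hB, mul_zero, div_zero, sub_zero]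
    ring
  field_simp
  ring

theorem PosDef.det_mul_prod_diag_le_det_hadamard_of_unique [Fintype l] [Fintype m]
    [DecidableEq l] [DecidableEq m] [Unique l] {A B : Matrix (l ⊕ m) (l ⊕ m) ℝ}
    (hA : A.PosDef) (hB : B.PosDef)
    (ih : ∀ A' B' : Matrix m m ℝ, A'.PosDef → B'.PosDef → A'.det * ∏ i, B' i i ≤ (A' ⊙ B').det) :
    A.det * ∏ i, B i i ≤ (A ⊙ B).det := by
  have hdiag : ∏ i, B i i = B.toBlocks₁₁.det * ∏ i, B.toBlocks₂₂ i i := by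
    rw [Fintype.prod_sum_type, det_unique, Fintype.prod_unique]
    rfl
  have hcorner : (A ⊙ B).toBlocks₁₁.det = A.toBlocks₁₁.det * B.toBlocks₁₁.det := by
    simp only [det_unique]
    rfl
  have hcorner_pos : 0 ≤ A.toBlocks₁₁.det * B.toBlocks₁₁.det :=
    (mul_pos hA.toBlocks₁₁.det_pos hB.toBlocks₁₁.det_pos).le
  calc A.det * ∏ i, B i i
      = A.toBlocks₁₁.det * B.toBlocks₁₁.det * (A.schurCompl.det * ∏ i, B.toBlocks₂₂ i i) := by
        rw [hA.det_eq_det_toBlocks₁₁_mul_det_schurCompl, hdiag]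
        ring
    _ ≤ A.toBlocks₁₁.det * B.toBlocks₁₁.det * (A.schurCompl ⊙ B.toBlocks₂₂).det :=
        mul_le_mul_of_nonneg_left (ih _ _ hA.schurCompl hB.toBlocks₂₂) hcorner_pos
    _ ≤ A.toBlocks₁₁.det * B.toBlocks₁₁.det * (A ⊙ B).schurCompl.det := by
        rw [schurCompl_hadamard_of_unique]
        exact mul_le_mul_of_nonneg_left ((hA.schurCompl.hadamard hB.toBlocks₂₂).det_le_det_add
          (hA.posSemidef_toBlocks₂₁_mul_inv_mul_toBlocks₁₂.hadamard hB.schurCompl.posSemidef))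
          hcorner_pos
    _ = (A ⊙ B).det := by
        rw [(hA.hadamard hB).det_eq_det_toBlocks₁₁_mul_det_schurCompl, hcorner]

end Blocks

theorem det_mul_prod_diag_le_det_hadamard_of_equiv {α β : Type*} [Fintype α] [DecidableEq α]
    [Fintype β] [DecidableEq β] (e : α ≃ β)
    (h : ∀ A B : Matrix α α ℝ, A.PosDef → B.PosDef → A.det * ∏ i, B i i ≤ (A ⊙ B).det)
    {A B : Matrix β β ℝ} (hA : A.PosDef) (hB : B.PosDef) :
    A.det * ∏ i, B i i ≤ (A ⊙ B).det := by
  have := h _ _ (hA.submatrix e.injective) (hB.submatrix e.injective)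
  rwa [det_submatrix_equiv_self, ← submatrix_hadamard, det_submatrix_equiv_self,
    show ∏ i, B.submatrix e e i i = ∏ i, B i i from e.prod_comp fun i => B i i] at this

/-- **Oppenheim's inequality**. -/
theorem PosDef.det_mul_prod_diag_le_det_hadamard {A B : Matrix n n ℝ} (hA : A.PosDef)
    (hB : B.PosDef) : A.det * ∏ i, B i i ≤ (A ⊙ B).det := by
  revert A B
  refine Fintype.induction_empty_option (P := fun α _ => ∀ [DecidableEq α] {A B : Matrix α α ℝ},
    A.PosDef → B.PosDef → A.det * ∏ i, B i i ≤ (A ⊙ B).det) ?_ ?_ ?_ n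
  · intro α β _ e h _ A B hA hB
    let := Fintype.ofEquiv β e.symm
    classical
    exact det_mul_prod_diag_le_det_hadamard_of_equiv e (fun A B => h) hA hB
  · intro _ A B _ _
    simp [det_isEmpty]
  · intro α _ ih _ A B hA hB
    classical
    exact det_mul_prod_diag_le_det_hadamard_of_equiv
      ((Equiv.sumComm _ _).trans (Equiv.optionEquivSumPUnit.{0} α).symm)
      (fun A B hA hB => hA.det_mul_prod_diag_le_det_hadamard_of_unique hB fun _ _ => ih) hA hB

end Matrix

theorem memA.smul_add_smul {V : Type*} [Fintype V] [DecidableEq V] {G : SimpleGraph V}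
    {x y t : ℝ} {M₁ M₂ : Matrix V V ℝ} (h₁ : memA G x M₁) (h₂ : memA G y M₂) (ht₀ : 0 < t)
    (ht₁ : t ≤ 1) : memA G (t * x + (1 - t) * y) (t • M₁ + (1 - t) • M₂) := by
  obtain ⟨hpd₁, hdiag₁, hedge₁⟩ := h₁
  obtain ⟨hpd₂, hdiag₂, hedge₂⟩ := h₂
  refine ⟨(hpd₁.smul ht₀).add_posSemidef (hpd₂.posSemidef.smul (sub_nonneg.mpr ht₁)),
    fun i => ?_, fun i j hij => ?_⟩
  · simp only [Matrix.add_apply, Matrix.smul_apply, smul_eq_mul, hdiag₁ i, hdiag₂ i]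
    ring
  · simp only [Matrix.add_apply, Matrix.smul_apply, smul_eq_mul, hedge₁ i j hij,
      hedge₂ i j hij]

theorem memA.hadamard {V : Type*} [Fintype V] [DecidableEq V] {G : SimpleGraph V}
    {x y : ℝ} {M₁ M₂ : Matrix V V ℝ} (h₁ : memA G x M₁) (h₂ : memA G y M₂) :
    memA G (x * y) (M₁ ⊙ M₂) := by
  obtain ⟨hpd₁, hdiag₁, hedge₁⟩ := h₁
  obtain ⟨hpd₂, hdiag₂, hedge₂⟩ := h₂
  refine ⟨hpd₁.hadamard hpd₂, fun i => ?_, fun i j hij => ?_⟩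
  · rw [hadamard_apply, hdiag₁ i, hdiag₂ i, mul_one]
  · rw [hadamard_apply, hedge₁ i j hij, hedge₂ i j hij]

theorem statement_3_general {V : Type*} [Fintype V] [DecidableEq V] (G : SimpleGraph V)
    (x y α : ℝ)
    (hα : α ∈ Set.Ioo (0 : ℝ) 1)
    (A₁ A₂ A₃ A₄ : Matrix V V ℝ)
    (h1 : IsMaxA G x A₁) (h2 : IsMaxA G y A₂)
    (h3 : IsMaxA G (α * x + (1 - α) * y) A₃)
    (h4 : IsMaxA G (x * y) A₄) :
    A₃.det ≥ A₁.det ^ α * A₂.det ^ (1 - α) ∧ A₄.det ≥ A₁.det := by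
  obtain ⟨hmem₁, -⟩ := h1
  obtain ⟨hmem₂, -⟩ := h2
  constructor
  · calc A₁.det ^ α * A₂.det ^ (1 - α) ≤ (α • A₁ + (1 - α) • A₂).det :=
          hmem₁.1.det_rpow_mul_det_rpow_le hmem₂.1.posSemidef hα.1.le hα.2.le
      _ ≤ A₃.det := h3.2 _ (hmem₁.smul_add_smul hmem₂ hα.1 hα.2.le)
  · calc A₁.det = A₁.det * ∏ i, A₂ i i := by simp only [hmem₂.2.1, prod_const_one, mul_one]
      _ ≤ (A₁ ⊙ A₂).det := hmem₁.1.det_mul_prod_diag_le_det_hadamard hmem₂.1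
      _ ≤ A₄.det := h4.2 _ (hmem₁.hadamard hmem₂)

theorem statement_3 {V : Type*} [Fintype V] [DecidableEq V] (G : SimpleGraph V)
    (x y α : ℝ) (hx : x ∈ Set.Ioo (-1 : ℝ) 1) (hy : y ∈ Set.Ioo (-1 : ℝ) 1)
    (hα : α ∈ Set.Ioo (0 : ℝ) 1)
    (A₁ A₂ A₃ A₄ : Matrix V V ℝ)
    (h1 : IsMaxA G x A₁) (h2 : IsMaxA G y A₂)
    (h3 : IsMaxA G (α * x + (1 - α) * y) A₃)
    (h4 : IsMaxA G (x * y) A₄) :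
    A₃.det ≥ A₁.det ^ α * A₂.det ^ (1 - α) ∧ A₄.det ≥ A₁.det :=
  statement_3_general G x y α hα A₁ A₂ A₃ A₄ h1 h2 h3 h4
end

section
/- Let G = (V,E) be a finite simple graph and x ∈ (−1,1). Let B be any real symmetric positive definite V×V matrix such that B_{uv} = 0 whenever u ≠ v are non-adjacent, and such that B_{uu} = 1 − x·∑_{v ∈ N(u)} B_{uv} for every vertex u (where N(u) is the neighborhood of u). Then det B ≤ det B_G(x) = 1/τ(G,x), and equality holds if and only if B = B_G(x). -/
open Matrix Finset Real

/-!
Let `S = √A`. The matrix `S B S` is positive definite, has determinant `det A · det B` and trace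
`tr (B A) = |V|`, since the equations imposed on `B` say exactly that every diagonal entry of
`B A` equals `1`. Bounding each eigenvalue by `λ ≤ exp (λ - 1)` gives
`det (S B S) ≤ exp (tr (S B S) - |V|) = 1`, with equality only when all eigenvalues are `1`,
that is, when `B = A⁻¹`.
-/

namespace Matrix

variable {n : Type*} [Fintype n] [DecidableEq n]

theorem IsHermitian.exp_trace_sub_card_eq_prod {C : Matrix n n ℝ} (hC : C.IsHermitian) :
    Real.exp (C.trace - (Fintype.card n : ℝ)) = ∏ i, Real.exp (hC.eigenvalues i - 1) := by
  rw [← exp_sum, sum_sub_distrib, hC.trace_eq_sum_eigenvalues]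
  simp

namespace PosDef

theorem det_le_exp_trace_sub_card {C : Matrix n n ℝ} (hC : C.PosDef) :
    C.det ≤ Real.exp (C.trace - (Fintype.card n : ℝ)) := by
  have hH := hC.isHermitian
  rw [hH.det_eq_prod_eigenvalues, hH.exp_trace_sub_card_eq_prod]
  simp only [RCLike.ofReal_real_eq_id, id_eq]
  exact prod_le_prod (fun i _ => (hC.eigenvalues_pos i).le)
    fun i _ => by linarith [add_one_le_exp (hH.eigenvalues i - 1)]

theorem eq_one_of_det_eq_exp_trace_sub_card {C : Matrix n n ℝ} (hC : C.PosDef)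
    (h : C.det = Real.exp (C.trace - (Fintype.card n : ℝ))) : C = 1 := by
  have hH := hC.isHermitian
  have hone : hH.eigenvalues = 1 := by
    by_contra hne
    obtain ⟨j, hj⟩ := Function.ne_iff.mp hne
    have hlt : hH.eigenvalues j < Real.exp (hH.eigenvalues j - 1) := by
      linarith [add_one_lt_exp (sub_ne_zero.mpr (show hH.eigenvalues j ≠ 1 from hj))]
    rw [hH.det_eq_prod_eigenvalues, hH.exp_trace_sub_card_eq_prod] at h
    simp only [RCLike.ofReal_real_eq_id, id_eq] at h
    refine h.not_lt (prod_lt_prod (fun i _ => hC.eigenvalues_pos i)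
      (fun i _ => by linarith [add_one_le_exp (hH.eigenvalues i - 1)]) ⟨j, mem_univ j, hlt⟩)
  have := hH.spectral_theorem
  rw [hone] at this
  simpa using this

open scoped MatrixOrder in
theorem exists_mul_eq_conj_posDef {A B : Matrix n n ℝ} (hA : A.PosDef) (hB : B.PosDef) :
    ∃ S C : Matrix n n ℝ, IsUnit S ∧ C.PosDef ∧ A * B = S * C * S⁻¹ := by
  set S := CFC.sqrt A
  have hSS : S * S = A := CFC.sqrt_mul_sqrt_self A hA.posSemidef.nonneg
  have hS : IsUnit S := by
    rw [isUnit_iff_isUnit_det, isUnit_iff_ne_zero]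
    intro h
    have := hA.det_pos
    rw [← hSS, det_mul, h, zero_mul] at this
    exact this.false
  have hSH : Sᴴ = S := (CFC.sqrt_nonneg A).posSemidef.isHermitian
  refine ⟨S, S * B * S, hS, ?_, ?_⟩
  · have := hB.conjTranspose_mul_mul_same (mulVec_injective_iff_isUnit.mpr hS)
    rwa [hSH] at this
  · rw [mul_assoc, mul_assoc, mul_assoc, mul_nonsing_inv _ ((isUnit_iff_isUnit_det S).mp hS),
      mul_one, ← mul_assoc, hSS]

theorem det_mul_le_exp_trace_mul_sub_card {A B : Matrix n n ℝ} (hA : A.PosDef) (hB : B.PosDef) :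
    (A * B).det ≤ Real.exp ((A * B).trace - (Fintype.card n : ℝ)) := by
  obtain ⟨S, C, hS, hC, hAB⟩ := exists_mul_eq_conj_posDef hA hB
  rw [hAB, det_conj hS, trace_conj hS]
  exact hC.det_le_exp_trace_sub_card

theorem mul_eq_one_of_det_mul_eq_exp_trace_mul_sub_card {A B : Matrix n n ℝ} (hA : A.PosDef)
    (hB : B.PosDef) (h : (A * B).det = Real.exp ((A * B).trace - (Fintype.card n : ℝ))) :
    A * B = 1 := by
  obtain ⟨S, C, hS, hC, hAB⟩ := exists_mul_eq_conj_posDef hA hB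
  rw [hAB, det_conj hS, trace_conj hS] at h
  rw [hAB, hC.eq_one_of_det_eq_exp_trace_sub_card h, mul_one,
    mul_nonsing_inv _ ((isUnit_iff_isUnit_det S).mp hS)]

end PosDef
end Matrix

theorem SimpleGraph.trace_mul_eq_card {V : Type*} [Fintype V] [DecidableEq V] (G : SimpleGraph V)
    [DecidableRel G.Adj] {x : ℝ} {A B : Matrix V V ℝ} (hAd : ∀ i, A i i = 1)
    (hAe : ∀ i j, G.Adj i j → A i j = x) (hB0 : ∀ u v, u ≠ v → ¬ G.Adj u v → B u v = 0)
    (hBd : ∀ u, B u u = 1 - x * ∑ v ∈ G.neighborFinset u, B u v) :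
    (B * A).trace = Fintype.card V := by
  have hrow : ∀ u, (B * A) u u = 1 := by
    intro u
    have hsplit : ∀ v, B u v * A v u =
        (if v = u then B u u else 0) + if G.Adj u v then x * B u v else 0 := by
      intro v
      by_cases hvu : v = u
      · subst hvu
        simp [hAd]
      · by_cases hadj : G.Adj u v
        · simp [hvu, hadj, hAe v u hadj.symm, mul_comm]
        · simp [hvu, hadj, hB0 u v (Ne.symm hvu) hadj]
    rw [mul_apply, sum_congr rfl fun v _ => hsplit v, sum_add_distrib, sum_ite_eq',
      ← sum_filter, ← mul_sum, ← SimpleGraph.neighborFinset_eq_filter, hBd]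
    simp
  simp [trace, hrow]

theorem statement_4_general {V : Type*} [Fintype V] [DecidableEq V] (G : SimpleGraph V)
    [DecidableRel G.Adj]
    (x : ℝ)
    (A : Matrix V V ℝ) (hA : IsMaxA G x A)
    (B : Matrix V V ℝ) (hB : B.PosDef)
    (hB0 : ∀ u v : V, u ≠ v → ¬ G.Adj u v → B u v = 0)
    (hBd : ∀ u : V, B u u = 1 - x * ∑ v ∈ G.neighborFinset u, B u v) :
    B.det ≤ A⁻¹.det ∧ A⁻¹.det = 1 / A.det ∧ (B.det = A⁻¹.det ↔ B = A⁻¹) := by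
  obtain ⟨⟨hApd, hAd, hAe⟩, -⟩ := hA
  have htr : (B * A).trace = Fintype.card V := G.trace_mul_eq_card hAd hAe hB0 hBd
  have hdetAinv : A⁻¹.det = 1 / A.det := by
    rw [det_nonsing_inv, one_div, Ring.inverse_eq_inv]
  have hdetBA : (B * A).det ≤ 1 := by
    simpa [htr] using hB.det_mul_le_exp_trace_mul_sub_card hApd
  refine ⟨?_, hdetAinv, fun h => ?_, fun h => h ▸ rfl⟩
  · rw [hdetAinv, le_div_iff₀ hApd.det_pos, ← det_mul]
    exact hdetBA
  · refine (inv_eq_left_inv (hB.mul_eq_one_of_det_mul_eq_exp_trace_mul_sub_card hApd ?_)).symm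
    rw [htr, sub_self, exp_zero, det_mul, h, hdetAinv, one_div, inv_mul_cancel₀ hApd.det_pos.ne']

theorem statement_4 {V : Type*} [Fintype V] [DecidableEq V] (G : SimpleGraph V)
    [DecidableRel G.Adj]
    (x : ℝ) (hx : x ∈ Set.Ioo (-1 : ℝ) 1)
    (A : Matrix V V ℝ) (hA : IsMaxA G x A)
    (B : Matrix V V ℝ) (hB : B.PosDef)
    (hB0 : ∀ u v : V, u ≠ v → ¬ G.Adj u v → B u v = 0)
    (hBd : ∀ u : V, B u u = 1 - x * ∑ v ∈ G.neighborFinset u, B u v) :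
    B.det ≤ A⁻¹.det ∧ A⁻¹.det = 1 / A.det ∧ (B.det = A⁻¹.det ↔ B = A⁻¹) :=
  statement_4_general G x A hA B hB hB0 hBd
end

section
/- Let G = (V,E) be a finite simple graph. For every x ∈ (−1,1), the function t ↦ τ(G,t) is differentiable at x and its derivative τ'(G,x) satisfies −τ'(G,x)/τ(G,x) = 2·∑_{{u,v} ∈ E} y_G(u,v), where the sum runs over the edges of G. -/
/-!
The maximizer `A` of `det` on `𝒜(G,x)` satisfies the first-order condition `(A⁻¹)ᵤᵥ = 0` for every
non-edge `u ≠ v`. Near `x`, `τ` is then squeezed between two functions that agree with it at `x`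
and have the same slope `det A · tr (A⁻¹ Adj_G)` there. From below: `A + (t - x) Adj_G ∈ 𝒜(G,t)`,
so `τ(t) ≥ det (A + (t - x) Adj_G)`. From above: AM–GM on the eigenvalues of `A^{-1/2} M A^{-1/2}`
gives `det M ≤ det A · exp (tr (A⁻¹ M) - |V|)`, and the first-order condition makes
`tr (A⁻¹ M) = |V| + (t - x) tr (A⁻¹ Adj_G)` for every `M ∈ 𝒜(G,t)`.
-/

open Matrix Finset Real

open Filter Topology

namespace Matrix

variable {n : Type*} [Fintype n]

lemma PosDef.eventually_add_smul {A : Matrix n n ℝ} (hA : A.PosDef) {S : Matrix n n ℝ}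
    (hS : S.IsHermitian) : ∀ᶠ r in 𝓝 (0 : ℝ), (A + r • S).PosDef := by
  have hsphere : ∀ᶠ r in 𝓝 (0 : ℝ), ∀ y ∈ Metric.sphere (0 : n → ℝ) 1,
      0 < y ⬝ᵥ (A + r • S) *ᵥ y := by
    refine (isCompact_sphere 0 1).eventually_forall_of_forall_eventually fun y hy => ?_
    have hy0 : y ≠ 0 := ne_zero_of_mem_unit_sphere ⟨y, hy⟩
    have hcont : Continuous fun p : ℝ × (n → ℝ) => p.2 ⬝ᵥ (A + p.1 • S) *ᵥ p.2 := by
      fun_prop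
    refine hcont.continuousAt.eventually (lt_mem_nhds ?_)
    simpa using hA.dotProduct_mulVec_pos hy0
  filter_upwards [hsphere] with r hr
  refine PosDef.of_dotProduct_mulVec_pos (hA.1.add (hS.smul (IsSelfAdjoint.all r))) fun x hx => ?_
  have hx' : 0 < ‖x‖ := norm_pos_iff.mpr hx
  have hy : ‖x‖⁻¹ • x ∈ Metric.sphere (0 : n → ℝ) 1 := by
    simp [norm_smul, hx'.ne']
  have hpos := hr _ hy
  rw [smul_dotProduct, mulVec_smul, dotProduct_smul, smul_eq_mul, smul_eq_mul] at hpos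
  have hinv : 0 < ‖x‖⁻¹ := inv_pos.mpr hx'
  simpa using (mul_pos_iff_of_pos_left hinv).1 ((mul_pos_iff_of_pos_left hinv).1 hpos)

variable [DecidableEq n]

lemma PosSemidef.det_le_exp_trace_sub_card {P : Matrix n n ℝ} (hP : P.PosSemidef) :
    P.det ≤ exp (P.trace - Fintype.card n) := by
  rw [hP.1.det_eq_prod_eigenvalues, hP.1.trace_eq_sum_eigenvalues, ← Finset.card_univ,
    ← nsmul_one, ← Finset.sum_const, ← Finset.sum_sub_distrib, exp_sum]
  simp only [RCLike.ofReal_real_eq_id, id]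
  refine Finset.prod_le_prod (fun i _ => hP.eigenvalues_nonneg i) fun i _ => ?_
  linarith [add_one_le_exp (hP.1.eigenvalues i - 1)]

open scoped MatrixOrder in
lemma PosDef.det_le_mul_exp_trace {A M : Matrix n n ℝ} (hA : A.PosDef) (hM : M.PosSemidef) :
    M.det ≤ A.det * exp (trace (A⁻¹ * M) - Fintype.card n) := by
  set R := CFC.sqrt A⁻¹
  have hR : Rᴴ = R := (CFC.sqrt_nonneg A⁻¹).posSemidef.1.eq
  have hRR : R * R = A⁻¹ := CFC.sqrt_mul_sqrt_self A⁻¹ hA.inv.posSemidef.nonneg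
  have hP := hM.mul_mul_conjTranspose_same R
  rw [hR] at hP
  have hdet : (R * M * R).det = A.det⁻¹ * M.det := by
    rw [det_mul, det_mul, mul_right_comm, ← det_mul, hRR, det_nonsing_inv, Ring.inverse_eq_inv]
  have htrace : (R * M * R).trace = trace (A⁻¹ * M) := by
    rw [trace_mul_comm, ← Matrix.mul_assoc, hRR]
  have h := hP.det_le_exp_trace_sub_card
  rw [hdet, htrace, inv_mul_le_iff₀ hA.det_pos] at h
  exact h

lemma hasDerivAt_det_one_add_smul (M : Matrix n n ℝ) :
    HasDerivAt (fun r : ℝ => det (1 + r • M)) (trace M) 0 := by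
  have h := (Polynomial.hasDerivAt (det (1 + (Polynomial.X : Polynomial ℝ) • M.map Polynomial.C)) 0)
  rw [derivative_det_one_add_X_smul] at h
  refine h.congr_of_eventuallyEq (Eventually.of_forall fun r => ?_)
  simp [_root_.eval_det, ← smul_eq_mul_diagonal]

lemma hasDerivAt_det_add_smul {A : Matrix n n ℝ} (hA : IsUnit A.det) (S : Matrix n n ℝ) :
    HasDerivAt (fun r : ℝ => det (A + r • S)) (A.det * trace (A⁻¹ * S)) 0 := by
  have hfac : ∀ r : ℝ, A + r • S = A * (1 + r • (A⁻¹ * S)) := fun r => by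
    rw [Matrix.mul_add, Matrix.mul_one, Matrix.mul_smul, ← Matrix.mul_assoc,
      mul_nonsing_inv A hA, Matrix.one_mul]
  simp only [hfac, det_mul]
  exact (hasDerivAt_det_one_add_smul _).const_mul _

end Matrix

lemma HasDerivAt.of_le_of_le {f g h : ℝ → ℝ} {x d : ℝ} (hf : HasDerivAt f d x)
    (hh : HasDerivAt h d x) (hfg : ∀ᶠ t in 𝓝 x, f t ≤ g t) (hgh : ∀ᶠ t in 𝓝 x, g t ≤ h t)
    (hfx : f x = g x) (hhx : h x = g x) : HasDerivAt g d x := by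
  rw [hasDerivAt_iff_isLittleO] at hf hh ⊢
  refine (Asymptotics.IsBigO.of_bound' ?_).trans_isLittleO (hf.norm_left.add hh.norm_left)
  filter_upwards [hfg, hgh] with t hfgt hght
  have := abs_le_max_abs_abs (a := f t - f x - (t - x) • d) (b := g t - g x - (t - x) • d)
    (c := h t - h x - (t - x) • d) (by rw [hfx]; linarith) (by rw [hhx]; linarith)
  simp only [Real.norm_eq_abs] at this ⊢
  exact this.trans ((max_le_add_of_nonneg (abs_nonneg _) (abs_nonneg _)).trans (le_abs_self _))

section Graph

variable {V : Type*} [Fintype V] [DecidableEq V] {G : SimpleGraph V}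

lemma memA_add_smul {x r y : ℝ} {A S : Matrix V V ℝ} (hA : memA G x A)
    (hpos : (A + r • S).PosDef) (hdiag : ∀ i, S i i = 0) (hadj : ∀ i j, G.Adj i j → S i j = y) :
    memA G (x + r * y) (A + r • S) :=
  ⟨hpos, fun i => by simp [hA.2.1 i, hdiag i],
    fun i j hij => by simp [hA.2.2 i j hij, hadj i j hij]⟩

lemma IsMaxA.inv_apply_eq_zero {x : ℝ} {A : Matrix V V ℝ} (hA : IsMaxA G x A) {u v : V}
    (huv : u ≠ v) (hnadj : ¬ G.Adj u v) : A⁻¹ u v = 0 := by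
  obtain ⟨hmem, hmax⟩ := hA
  set S : Matrix V V ℝ := single u v 1 + single v u 1
  have hS : S.IsHermitian := by
    simp only [S, IsHermitian, conjTranspose_add, conjTranspose_single, star_one, add_comm]
  have hdiag : ∀ i, S i i = 0 := fun i => by
    have h₁ : ¬ (u = i ∧ v = i) := fun ⟨hu, hv⟩ => huv (hu.trans hv.symm)
    have h₂ : ¬ (v = i ∧ u = i) := fun ⟨hv, hu⟩ => huv (hu.trans hv.symm)
    simp [S, h₁, h₂]
  have hadj : ∀ i j, G.Adj i j → S i j = 0 := fun i j hij => by
    have h₁ : ¬ (u = i ∧ v = j) := fun ⟨hu, hv⟩ => hnadj (hu ▸ hv ▸ hij)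
    have h₂ : ¬ (v = i ∧ u = j) := fun ⟨hv, hu⟩ => hnadj (hu ▸ hv ▸ hij.symm)
    simp [S, h₁, h₂]
  have hlocal : IsLocalMax (fun r : ℝ => det (A + r • S)) 0 := by
    filter_upwards [hmem.1.eventually_add_smul hS] with r hr
    simpa using hmax _ (by simpa using memA_add_smul hmem hr hdiag hadj)
  have hderiv := hlocal.hasDerivAt_eq_zero (hasDerivAt_det_add_smul hmem.1.det_pos.ne'.isUnit S)
  have hsymm : A⁻¹ v u = A⁻¹ u v := by simpa using (hmem.1.1.inv.apply v u).symm
  simp only [S, Matrix.mul_add, trace_add, trace_mul_single, hsymm, mul_eq_zero,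
    hmem.1.det_pos.ne', false_or] at hderiv
  simpa using hderiv

variable [DecidableRel G.Adj]

lemma memA.eventually_memA_add_sub_smul_adjMatrix {x : ℝ} {A : Matrix V V ℝ} (hA : memA G x A) :
    ∀ᶠ t in 𝓝 x, memA G t (A + (t - x) • G.adjMatrix ℝ) := by
  have hpos := hA.1.eventually_add_smul (G.isHermitian_adjMatrix ℝ)
  filter_upwards [(tendsto_sub_nhds_zero_iff.2 tendsto_id).eventually hpos] with t ht
  simpa using memA_add_smul (y := 1) hA ht (fun i => by simp) (fun i j hij => by simp [hij])

lemma IsMaxA.trace_inv_mul {x t : ℝ} {A M : Matrix V V ℝ} (hA : IsMaxA G x A) (hM : memA G t M) :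
    trace (A⁻¹ * M) = Fintype.card V + (t - x) * trace (A⁻¹ * G.adjMatrix ℝ) := by
  have hzero : trace (A⁻¹ * (M - A - (t - x) • G.adjMatrix ℝ)) = 0 := by
    refine Finset.sum_eq_zero fun i _ => Finset.sum_eq_zero fun j _ => ?_
    by_cases hij : i = j
    · subst hij; simp [hM.2.1, hA.1.2.1]
    by_cases hadj : G.Adj j i
    · simp [hM.2.2 j i hadj, hA.1.2.2 j i hadj, hadj]
    · simp [hA.inv_apply_eq_zero hij (fun h => hadj h.symm)]
  rw [Matrix.mul_sub, Matrix.mul_sub, trace_sub, trace_sub, nonsing_inv_mul A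
    hA.1.1.det_pos.ne'.isUnit, trace_one, Matrix.mul_smul, trace_smul, smul_eq_mul] at hzero
  linarith

lemma IsMaxA.det_le_mul_exp {x t : ℝ} {A M : Matrix V V ℝ} (hA : IsMaxA G x A) (hM : memA G t M) :
    M.det ≤ A.det * exp ((t - x) * trace (A⁻¹ * G.adjMatrix ℝ)) := by
  simpa [hA.trace_inv_mul hM] using hA.1.1.det_le_mul_exp_trace hM.1.posSemidef

end Graph

theorem statement_7 {V : Type*} [Fintype V] [DecidableEq V] (G : SimpleGraph V) [DecidableRel G.Adj]
    (tau : ℝ → ℝ)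
    (htau : ∀ t ∈ Set.Ioo (-1 : ℝ) 1,
      ∃ A : Matrix V V ℝ, IsMaxA G t A ∧ tau t = A.det)
    (x : ℝ) (hx : x ∈ Set.Ioo (-1 : ℝ) 1)
    (A : Matrix V V ℝ) (hA : IsMaxA G x A) :
    ∃ d : ℝ, HasDerivAt tau d x ∧
      -(d / A.det) = ∑ u : V, ∑ w : V, if G.Adj u w then -(A⁻¹ u w) else 0 := by
  set s := trace (A⁻¹ * G.adjMatrix ℝ)
  have hτx : tau x = A.det := by
    obtain ⟨A', hA', hτ⟩ := htau x hx
    exact hτ.trans (le_antisymm (hA.2 _ hA'.1) (hA'.2 _ hA.1))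
  have hnear : ∀ᶠ t in 𝓝 x, t ∈ Set.Ioo (-1 : ℝ) 1 := Ioo_mem_nhds hx.1 hx.2
  have hlower : ∀ᶠ t in 𝓝 x, det (A + (t - x) • G.adjMatrix ℝ) ≤ tau t := by
    filter_upwards [hnear, hA.1.eventually_memA_add_sub_smul_adjMatrix] with t ht hM
    obtain ⟨A', hA', hτ⟩ := htau t ht
    exact hτ ▸ hA'.2 _ hM
  have hupper : ∀ᶠ t in 𝓝 x, tau t ≤ A.det * exp ((t - x) * s) := by
    filter_upwards [hnear] with t ht
    obtain ⟨A', hA', hτ⟩ := htau t ht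
    exact hτ ▸ hA.det_le_mul_exp hA'.1
  have hlower_deriv : HasDerivAt (fun t => det (A + (t - x) • G.adjMatrix ℝ)) (A.det * s) x :=
    HasDerivAt.comp_sub_const x x (by
      simpa using hasDerivAt_det_add_smul hA.1.1.det_pos.ne'.isUnit (G.adjMatrix ℝ))
  have hupper_deriv : HasDerivAt (fun t => A.det * exp ((t - x) * s)) (A.det * s) x := by
    simpa using ((((hasDerivAt_id x).sub_const x).mul_const s).exp).const_mul A.det
  refine ⟨A.det * s, hlower_deriv.of_le_of_le hupper_deriv hlower hupper (by simp [hτx])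
    (by simp [hτx]), ?_⟩
  rw [mul_div_cancel_left₀ _ hA.1.1.det_pos.ne']
  simp only [s, trace, diag_apply, mul_apply, SimpleGraph.adjMatrix_apply, G.adj_comm, mul_ite,
    mul_one, mul_zero, ← sum_neg_distrib, neg_ite, neg_zero]
end

section
/- Let G = (V,E) be a finite simple graph and x ∈ [0,1). Suppose that every off-diagonal entry of B_G(x) is nonpositive (i.e., B_G(x) is an M-matrix), and suppose the edge {u,v} ∈ E is contained in a clique of G on r vertices. Then y_G(u,v) ≤ x/((1 − x)(1 + (r−1)x)). In particular, y_G(u,v) ≤ x/(1 − x²) for every edge {u,v} of G. -/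
/-!
Write `B = A⁻¹` and `S` for the clique. On `S × S` the matrix `A` is `(1 - x) I + x J`, whose
inverse is explicit; let `w` be its column at `v`, extended by zero outside `S`, so that
`w u = -x / ((1 - x) (1 + (r - 1) x))`. The defect `z = A w - e_v` vanishes on `S`, and
`B z = w - B e_v` is `-B t v ≥ 0` at every `t ∉ S`. A positive definite matrix whose off-diagonal
entries on a block `T` are nonpositive is monotone on vectors supported in `T` (test `M z` against
the negative part of `z`), so `z ≥ 0`. As `z u = 0` and `B u k ≤ 0` for `k ≠ u`, `(B z) u ≤ 0`,
that is `B u v ≥ w u`. In block form: `B_SS - (A_SS)⁻¹ = B_ST B_TT⁻¹ B_TS ≥ 0` entrywise.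
The denominators are positive because `A` is positive definite: test it against `e_u - e_v` and
against the indicator of `S`.
-/

open Matrix Finset Real

namespace Matrix

variable {n : Type*} [Fintype n]

theorem PosDef.nonneg_of_mulVec_nonneg {M : Matrix n n ℝ} (hM : M.PosDef) {T : Set n}
    (hoff : ∀ i ∈ T, ∀ j ∈ T, i ≠ j → M i j ≤ 0) {z : n → ℝ} (hz : ∀ i ∉ T, z i = 0)
    (hMz : ∀ i ∈ T, 0 ≤ (M *ᵥ z) i) : 0 ≤ z := by
  rw [← negPart_eq_zero]
  by_contra hq
  have hmem : ∀ i, z i ≠ 0 → i ∈ T := fun i hi => by_contra fun h => hi (hz i h)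
  have hqz : 0 ≤ z⁻ ⬝ᵥ (M *ᵥ z) := by
    refine sum_nonneg fun k _ => ?_
    by_cases hk : k ∈ T
    · exact mul_nonneg (negPart_nonneg _) (hMz k hk)
    · simp [hz k hk]
  have hqp : z⁻ ⬝ᵥ (M *ᵥ z⁺) ≤ 0 := by
    simp only [dotProduct, mulVec, mul_sum]
    refine sum_nonpos fun k _ => sum_nonpos fun l _ => ?_
    simp only [Pi.negPart_apply, Pi.posPart_apply]
    rcases le_or_gt 0 (z k) with hk | hk
    · simp [negPart_eq_zero.mpr hk]
    rcases le_or_gt (z l) 0 with hl | hl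
    · simp [posPart_eq_zero.mpr hl]
    have hkl : k ≠ l := by rintro rfl; linarith
    have := hoff k (hmem k hk.ne) l (hmem l hl.ne') hkl
    have := mul_nonneg (negPart_nonneg (z k)) (posPart_nonneg (z l))
    nlinarith
  have hqq : 0 < z⁻ ⬝ᵥ (M *ᵥ z⁻) := by
    simpa using hM.dotProduct_mulVec_pos hq
  have hsplit : z⁻ ⬝ᵥ (M *ᵥ z) = z⁻ ⬝ᵥ (M *ᵥ z⁺) - z⁻ ⬝ᵥ (M *ᵥ z⁻) := by
    rw [← dotProduct_sub, ← mulVec_sub, posPart_sub_negPart]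
  linarith

theorem mulVec_apply_nonpos {M : Matrix n n ℝ} {i : n} (hoff : ∀ j, j ≠ i → M i j ≤ 0)
    {z : n → ℝ} (hz : 0 ≤ z) (hzi : z i = 0) : (M *ᵥ z) i ≤ 0 := by
  refine sum_nonpos fun j _ => ?_
  rcases eq_or_ne j i with rfl | hj
  · simp [hzi]
  · exact mul_nonpos_of_nonpos_of_nonneg (hoff j hj) (hz j)

section UniformBlock

variable [DecidableEq n] {A : Matrix n n ℝ} {s : Finset n} {x : ℝ}

def IsUniformBlock (A : Matrix n n ℝ) (s : Finset n) (x : ℝ) : Prop :=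
  ∀ i ∈ s, ∀ j ∈ s, A i j = if i = j then 1 else x

theorem IsUniformBlock.mulVec_apply (hs : IsUniformBlock A s x) {w : n → ℝ}
    (hw : ∀ k ∉ s, w k = 0) {i : n} (hi : i ∈ s) :
    (A *ᵥ w) i = (1 - x) * w i + x * ∑ k ∈ s, w k := by
  have hsupp : (A *ᵥ w) i = ∑ k ∈ s, A i k * w k :=
    (sum_subset (subset_univ s) fun k _ hk => by rw [hw k hk, mul_zero]).symm
  have hterm : ∀ k ∈ s, A i k * w k = x * w k + if i = k then (1 - x) * w k else 0 := by
    intro k hk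
    rw [hs i hi k hk]
    split_ifs <;> ring
  rw [hsupp, sum_congr rfl hterm, sum_add_distrib, ← mul_sum, sum_ite_eq s i, if_pos hi]
  ring

theorem IsUniformBlock.dotProduct_mulVec (hs : IsUniformBlock A s x) {w : n → ℝ}
    (hw : ∀ k ∉ s, w k = 0) :
    w ⬝ᵥ (A *ᵥ w) = (1 - x) * ∑ k ∈ s, w k ^ 2 + x * (∑ k ∈ s, w k) ^ 2 := by
  have hsupp : w ⬝ᵥ (A *ᵥ w) = ∑ k ∈ s, w k * (A *ᵥ w) k :=
    (sum_subset (subset_univ s) fun k _ hk => by rw [hw k hk, zero_mul]).symm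
  have hterm : ∀ k ∈ s, w k * (A *ᵥ w) k = (1 - x) * w k ^ 2 + x * (∑ j ∈ s, w j) * w k :=
    fun k hk => by rw [hs.mulVec_apply hw hk]; ring
  rw [hsupp, sum_congr rfl hterm, sum_add_distrib, ← mul_sum, ← mul_sum]
  ring

theorem PosDef.one_sub_pos_of_isUniformBlock (hA : A.PosDef) (hs : IsUniformBlock A s x)
    {u v : n} (hu : u ∈ s) (hv : v ∈ s) (huv : u ≠ v) : 0 < 1 - x := by
  set w : n → ℝ := Pi.single u 1 - Pi.single v 1
  have hw : ∀ k ∉ s, w k = 0 := fun k hk => by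
    simp [w, ne_of_mem_of_not_mem hu hk |>.symm, ne_of_mem_of_not_mem hv hk |>.symm]
  have hw0 : w ≠ 0 := fun h => by simpa [w, huv] using congrFun h u
  have hsum : ∑ k ∈ s, w k = 0 := by simp [w, sum_sub_distrib, hu, hv]
  have hpos := hA.dotProduct_mulVec_pos hw0
  rw [star_trivial, hs.dotProduct_mulVec hw, hsum] at hpos
  exact pos_of_mul_pos_left (by simpa using hpos) (sum_nonneg fun _ _ => sq_nonneg _)

theorem PosDef.one_add_pos_of_isUniformBlock (hA : A.PosDef) (hs : IsUniformBlock A s x)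
    (hne : s.Nonempty) :
    0 < 1 + ((#s : ℝ) - 1) * x := by
  set w : n → ℝ := fun k => if k ∈ s then 1 else 0
  have hw : ∀ k ∉ s, w k = 0 := fun k hk => if_neg hk
  obtain ⟨u, hu⟩ := hne
  have hw0 : w ≠ 0 := fun h => by simpa [w, hu] using congrFun h u
  have hsum : ∑ k ∈ s, w k = #s := by simp [w]
  have hsum_sq : ∑ k ∈ s, w k ^ 2 = #s := by simp [w]
  have hpos := hA.dotProduct_mulVec_pos hw0
  rw [star_trivial, hs.dotProduct_mulVec hw, hsum, hsum_sq] at hpos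
  have hcard : (0 : ℝ) < #s := by exact_mod_cast card_pos.mpr ⟨u, hu⟩
  refine pos_of_mul_pos_right (a := (#s : ℝ)) ?_ hcard.le
  linear_combination hpos

theorem PosDef.neg_inv_apply_le_of_isUniformBlock (hA : A.PosDef) (hs : IsUniformBlock A s x)
    (hM : ∀ i j, i ≠ j → A⁻¹ i j ≤ 0)
    {u v : n} (hu : u ∈ s) (hv : v ∈ s) (huv : u ≠ v) :
    -(A⁻¹ u v) ≤ x / ((1 - x) * (1 + ((#s : ℝ) - 1) * x)) := by
  have hx1 := hA.one_sub_pos_of_isUniformBlock hs hu hv huv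
  have hxs := hA.one_add_pos_of_isUniformBlock hs ⟨u, hu⟩
  set c := x / ((1 - x) * (1 + ((#s : ℝ) - 1) * x))
  -- on `s`, `A` is `(1 - x) • 1 + x • J`; `w` is the column at `v` of its inverse, extended by zero
  set w : n → ℝ := fun k => if k ∈ s then (Pi.single v (1 - x)⁻¹ : n → ℝ) k - c else 0
  have hw : ∀ k ∉ s, w k = 0 := fun k hk => if_neg hk
  have hc : (1 + ((#s : ℝ) - 1) * x) * c = x / (1 - x) := by
    simp only [c]
    field_simp
  have hAw : ∀ i ∈ s, (A *ᵥ w) i = (Pi.single v 1 : n → ℝ) i := by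
    intro i hi
    have hsum : ∑ k ∈ s, w k = (1 - x)⁻¹ - #s * c := by
      rw [sum_congr rfl fun k hk => if_pos hk, sum_sub_distrib, sum_pi_single', if_pos hv,
        sum_const, nsmul_eq_mul]
    rw [hs.mulVec_apply hw hi, hsum]
    simp only [w, if_pos hi]
    rcases eq_or_ne i v with rfl | hiv
    · rw [Pi.single_eq_same, Pi.single_eq_same]
      linear_combination mul_inv_cancel₀ hx1.ne' - hc
    · rw [Pi.single_eq_of_ne hiv, Pi.single_eq_of_ne hiv]
      linear_combination -hc
  set z := A *ᵥ w - Pi.single v 1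
  have hBz : A⁻¹ *ᵥ z = w - A⁻¹.col v := by
    rw [mulVec_sub, mulVec_mulVec, nonsing_inv_mul A (A.isUnit_iff_isUnit_det.mp hA.isUnit),
      one_mulVec, mulVec_single_one]
  have hz : 0 ≤ z := by
    refine hA.inv.nonneg_of_mulVec_nonneg (T := (↑s)ᶜ) (fun i _ j _ hij => hM i j hij)
      (fun i hi => sub_eq_zero.mpr (hAw i (by simpa using hi))) fun i hi => ?_
    have hiv : i ≠ v := fun h => hi (h ▸ hv)
    simpa [hBz, hw i hi] using hM i v hiv
  have hzu : (A⁻¹ *ᵥ z) u ≤ 0 :=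
    mulVec_apply_nonpos (fun j hj => hM u j hj.symm) hz (by simp [z, hAw u hu, huv])
  have : -c ≤ A⁻¹ u v := by simpa [hBz, w, hu, huv] using hzu
  linarith

end UniformBlock

end Matrix

theorem statement_12_general {V : Type*} [Fintype V] [DecidableEq V] (G : SimpleGraph V)
    (x : ℝ)
    (A : Matrix V V ℝ) (hA : IsMaxA G x A)
    (hM : ∀ u v : V, u ≠ v → A⁻¹ u v ≤ 0)
    (u v : V) (huv : G.Adj u v)
    (r : ℕ) (s : Finset V) (hclique : G.IsClique s) (hcard : s.card = r)
    (hus : u ∈ s) (hvs : v ∈ s) :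
    -(A⁻¹ u v) ≤ x / ((1 - x) * (1 + ((r : ℝ) - 1) * x)) ∧
    ∀ u' v' : V, G.Adj u' v' → -(A⁻¹ u' v') ≤ x / (1 - x ^ 2) := by
  obtain ⟨⟨hApd, hdiag, hedge⟩, -⟩ := hA
  have hblock : ∀ t : Finset V, G.IsClique t → IsUniformBlock A t x := by
    intro t ht i hi j hj
    split_ifs with hij
    · exact hij ▸ hdiag i
    · exact hedge i j (ht hi hj hij)
  refine ⟨hcard ▸ hApd.neg_inv_apply_le_of_isUniformBlock (hblock s hclique) hM hus hvs huv.ne,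
    fun u' v' h' => ?_⟩
  have hpair : G.IsClique (({u', v'} : Finset V) : Set V) := by
    rw [coe_pair]
    exact SimpleGraph.isClique_pair.mpr fun _ => h'
  have hedge_bound := hApd.neg_inv_apply_le_of_isUniformBlock (hblock _ hpair) hM
    (mem_insert_self u' {v'}) (mem_insert_of_mem (mem_singleton_self v')) h'.ne
  rw [card_pair h'.ne] at hedge_bound
  convert hedge_bound using 2
  push_cast
  ring

theorem statement_12 {V : Type*} [Fintype V] [DecidableEq V] (G : SimpleGraph V)
    (x : ℝ) (hx0 : 0 ≤ x) (hx1 : x < 1)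
    (A : Matrix V V ℝ) (hA : IsMaxA G x A)
    (hM : ∀ u v : V, u ≠ v → A⁻¹ u v ≤ 0)
    (u v : V) (huv : G.Adj u v)
    (r : ℕ) (s : Finset V) (hclique : G.IsClique s) (hcard : s.card = r)
    (hus : u ∈ s) (hvs : v ∈ s) :
    -(A⁻¹ u v) ≤ x / ((1 - x) * (1 + ((r : ℝ) - 1) * x)) ∧
    ∀ u' v' : V, G.Adj u' v' → -(A⁻¹ u' v') ≤ x / (1 - x ^ 2) :=
  statement_12_general G x A hA hM u v huv r s hclique hcard hus hvs
end

section
/- Let d ≥ 1 and let G be a finite simple d-regular graph on v(G) vertices. Then for every x ∈ (0,1), τ(G,x)^{1/v(G)} ≤ τ(K_{d+1}, x)^{1/(d+1)}, where K_{d+1} is the complete graph on d+1 vertices. -/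
open Matrix Finset Real

/-!
Put `s = x / (1 + d x)`, `P = s (1 + A_G)` and `B = (1 - x)⁻¹ (1 - P)`; for `G = K_{d+1}` this
`B` is the inverse of the only matrix in `𝒜(K_{d+1}, x)`. Regularity gives `tr (B M) = v(G)` for
every `M ∈ 𝒜(G, x)`, so AM-GM on the eigenvalues of `L B Lᴴ`, where `M = Lᴴ L`, yields
`det M · det B ≤ 1`. To bound `det B` from below: the eigenvalues `w` of `P` are at most
`u = (d + 1) s < 1` (the Laplacian `d - A_G` is positive semidefinite), and `∑ w = s v(G)`,
`∑ w² = s² (d + 1) v(G)`. Since `(log (1 - w) + w) / w²` is decreasing, `log (1 - w) ≥ -w + c w²`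
with equality at `w = u`; summing over the eigenvalues gives
`det (1 - P) ≥ (1 - u) ^ (v(G) / (d + 1))`, and the two bounds combine to
`det M ≤ τ(K_{d+1}, x) ^ (v(G) / (d + 1))`.
-/

theorem Real.hasSum_pow_div_neg_log_one_sub_sub {y : ℝ} (hy : |y| < 1) :
    HasSum (fun n : ℕ => y ^ (n + 2) / (n + 2)) (-log (1 - y) - y) := by
  have h := (hasSum_nat_add_iff' 1).mpr (hasSum_pow_div_log_of_abs_lt_one hy)
  have e : (fun n : ℕ => y ^ (n + 2) / ((n : ℝ) + 2)) =
      fun n => y ^ (n + 1 + 1) / (((n + 1 : ℕ) : ℝ) + 1) := by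
    ext n; push_cast; ring
  rw [e]
  simpa using h

theorem Real.log_one_sub_add_le_neg_sq_div_two {u : ℝ} (hu0 : 0 ≤ u) (hu1 : u < 1) :
    log (1 - u) + u ≤ -(u ^ 2 / 2) := by
  have h : u ^ 2 / 2 ≤ -log (1 - u) - u := by
    simpa using le_hasSum (hasSum_pow_div_neg_log_one_sub_sub (abs_lt.2 ⟨by linarith, hu1⟩)) 0
      (fun n _ => by positivity)
  linarith

theorem Real.neg_sq_div_two_le_log_one_sub_add {w : ℝ} (hw : w ≤ 0) :
    -(w ^ 2 / 2) ≤ log (1 - w) + w := by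
  have h := le_log_one_add_of_nonneg (neg_nonneg.2 hw)
  rw [← sub_eq_add_neg] at h
  have h' : -w - w ^ 2 / 2 ≤ 2 * -w / (-w + 2) := by
    rw [le_div_iff₀ (by linarith)]
    nlinarith [mul_nonneg (sq_nonneg w) (neg_nonneg.2 hw)]
  linarith

theorem Real.sq_mul_log_one_sub_add_le_of_nonneg {u w : ℝ} (hw : 0 ≤ w) (hwu : w ≤ u)
    (hu : u < 1) :
    w ^ 2 * (log (1 - u) + u) ≤ u ^ 2 * (log (1 - w) + w) := by
  have hS (y : ℝ) (hy0 : 0 ≤ y) (hy1 : y < 1) :=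
    hasSum_pow_div_neg_log_one_sub_sub (abs_lt.2 ⟨by linarith, hy1⟩)
  have h := hasSum_le (fun n => ?_) ((hS w hw (hwu.trans_lt hu)).mul_left (u ^ 2))
    ((hS u (hw.trans hwu) hu).mul_left (w ^ 2))
  · linarith
  · rw [mul_div_assoc', mul_div_assoc']
    gcongr ?_ / _
    calc u ^ 2 * w ^ (n + 2) = (u * w) ^ 2 * w ^ n := by ring
      _ ≤ (u * w) ^ 2 * u ^ n := by gcongr
      _ = w ^ 2 * u ^ (n + 2) := by ring

theorem Real.mul_sq_le_log_one_sub_add {u w : ℝ} (hu0 : 0 < u) (hu1 : u < 1) (hwu : w ≤ u) :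
    (log (1 - u) + u) / u ^ 2 * w ^ 2 ≤ log (1 - w) + w := by
  rw [div_mul_eq_mul_div, div_le_iff₀ (by positivity), mul_comm _ (u ^ 2), mul_comm (log _ + _)]
  rcases le_total w 0 with hw | hw
  · -- both sides compare with `-u² w² / 2`
    have hu := log_one_sub_add_le_neg_sq_div_two hu0.le hu1
    have hw := neg_sq_div_two_le_log_one_sub_add hw
    nlinarith [mul_nonneg (sq_nonneg u) (sq_nonneg w)]
  · exact sq_mul_log_one_sub_add_le_of_nonneg hw hwu hu1

namespace Matrix
variable {n : Type*} [Fintype n] [DecidableEq n]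

namespace IsHermitian
variable {P : Matrix n n ℝ} (hP : P.IsHermitian)
include hP

theorem eigenvalues_le_of_posSemidef {u : ℝ} (h : (u • 1 - P).PosSemidef) (i : n) :
    hP.eigenvalues i ≤ u := by
  have hv := h.dotProduct_mulVec_nonneg (hP.eigenvectorBasis i)
  have hnorm : star ⇑(hP.eigenvectorBasis i) ⬝ᵥ ⇑(hP.eigenvectorBasis i) = 1 := by
    rw [dotProduct_comm, ← EuclideanSpace.inner_eq_star_dotProduct, real_inner_self_eq_norm_sq,
      hP.eigenvectorBasis.orthonormal.1 i, one_pow]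
  rw [sub_mulVec, dotProduct_sub, smul_mulVec, one_mulVec, dotProduct_smul,
    hP.mulVec_eigenvectorBasis, dotProduct_smul, hnorm] at hv
  simpa using hv

theorem det_one_sub : (1 - P).det = ∏ i, (1 - hP.eigenvalues i) := by
  have h := P.eval_charpoly 1
  rw [hP.charpoly_eq, Polynomial.eval_prod] at h
  simpa using h.symm

theorem trace_mul_self : (P * P).trace = ∑ i, hP.eigenvalues i ^ 2 := by
  conv_lhs => rw [hP.spectral_theorem, ← map_mul, Unitary.conjStarAlgAut_apply, trace_mul_cycle,
    Unitary.coe_star_mul_self, one_mul, diagonal_mul_diagonal, trace_diagonal]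
  simp [sq]

theorem exp_neg_trace_add_le_det_one_sub {u : ℝ} (hu0 : 0 < u) (hu1 : u < 1)
    (h : (u • 1 - P).PosSemidef) :
    Real.exp (-P.trace + (log (1 - u) + u) / u ^ 2 * (P * P).trace) ≤ (1 - P).det := by
  rw [hP.det_one_sub, hP.trace_eq_sum_eigenvalues, hP.trace_mul_self, mul_sum,
    ← sum_neg_distrib, ← sum_add_distrib, Real.exp_sum]
  refine prod_le_prod (fun _ _ => (Real.exp_pos _).le) fun i _ => ?_
  have hi := hP.eigenvalues_le_of_posSemidef h i
  rw [← le_log_iff_exp_le (by linarith)]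
  have := mul_sq_le_log_one_sub_add hu0 hu1 hi
  simp only [RCLike.ofReal_real_eq_id, id]
  linarith

end IsHermitian

theorem PosSemidef.det_le_exp_trace_sub_card_s16 {C : Matrix n n ℝ} (hC : C.PosSemidef) :
    C.det ≤ exp (C.trace - Fintype.card n) := by
  simp only [hC.1.det_eq_prod_eigenvalues, hC.1.trace_eq_sum_eigenvalues,
    RCLike.ofReal_real_eq_id, id, ← card_univ, ← nsmul_one, ← sum_const, ← sum_sub_distrib,
    exp_sum]
  refine prod_le_prod (fun i _ => hC.eigenvalues_nonneg i) fun i _ => ?_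
  linarith [add_one_le_exp (hC.1.eigenvalues i - 1)]

open scoped MatrixOrder in
theorem PosSemidef.det_mul_det_le_exp_trace {M B : Matrix n n ℝ} (hM : M.PosSemidef)
    (hB : B.PosSemidef) : M.det * B.det ≤ exp ((B * M).trace - Fintype.card n) := by
  obtain ⟨L, rfl⟩ := CStarAlgebra.nonneg_iff_eq_star_mul_self.mp hM.nonneg
  have hC := (hB.mul_mul_conjTranspose_same L).det_le_exp_trace_sub_card_s16
  rwa [det_mul, det_mul, mul_comm, ← mul_assoc, ← det_mul, trace_mul_cycle,
    trace_mul_comm, ← star_eq_conjTranspose] at hC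

end Matrix

namespace SimpleGraph.IsRegularOfDegree
variable {V : Type*} [Fintype V] {G : SimpleGraph V} [DecidableRel G.Adj]
  {d : ℕ} (hreg : G.IsRegularOfDegree d)
include hreg

theorem posSemidef_smul_one_sub_adjMatrix [DecidableEq V] :
    ((d : ℝ) • 1 - G.adjMatrix ℝ).PosSemidef := by
  have hdeg : G.degMatrix ℝ = (d : ℝ) • 1 := by
    ext i j
    simp [degMatrix, diagonal_apply, one_apply, hreg i]
  rw [← hdeg]
  exact G.posSemidef_lapMatrix ℝ

theorem posSemidef_smul_one_sub_smul_one_add_adjMatrix [DecidableEq V] {s : ℝ} (hs : 0 ≤ s) :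
    (((d + 1) * s) • 1 - s • (1 + G.adjMatrix ℝ)).PosSemidef := by
  have h : ((d + 1) * s) • 1 - s • (1 + G.adjMatrix ℝ) =
      s • ((d : ℝ) • 1 - G.adjMatrix ℝ) := by
    module
  rw [h]
  exact hreg.posSemidef_smul_one_sub_adjMatrix.smul hs

theorem trace_adjMatrix_mul_self :
    (G.adjMatrix ℝ * G.adjMatrix ℝ).trace = Fintype.card V * d := by
  simp_rw [trace, diag_apply, adjMatrix_mul_self_apply_self, hreg.degree_eq, sum_const,
    card_univ, nsmul_eq_mul]

theorem trace_adjMatrix_mul {M : Matrix V V ℝ} {x : ℝ} (hM : ∀ i j, G.Adj i j → M i j = x) :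
    (G.adjMatrix ℝ * M).trace = Fintype.card V * (d * x) := by
  have hrow (i : V) : ∑ j ∈ G.neighborFinset i, M j i = d * x := by
    rw [sum_congr rfl fun j hj => hM j i ((G.mem_neighborFinset i j).1 hj).symm, sum_const,
      card_neighborFinset_eq_degree, hreg i, nsmul_eq_mul]
  simp [trace, adjMatrix_mul_apply, hrow]

theorem rpow_le_det_one_sub_smul [DecidableEq V] {s : ℝ} (hs0 : 0 < s) (hs1 : (d + 1) * s < 1) :
    (1 - (d + 1) * s) ^ ((Fintype.card V : ℝ) / (d + 1)) ≤
      (1 - s • (1 + G.adjMatrix ℝ)).det := by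
  set P := s • (1 + G.adjMatrix ℝ)
  have hP : P.IsHermitian :=
    (isHermitian_one.add (G.isHermitian_adjMatrix ℝ)).smul (IsSelfAdjoint.all s)
  have htr : P.trace = s * Fintype.card V := by
    simp [P, trace_add]
  have htr2 : (P * P).trace = s ^ 2 * (Fintype.card V * (d + 1)) := by
    simp only [P, smul_mul_smul, add_mul, mul_add, one_mul, mul_one, trace_smul, trace_add,
      trace_one, trace_adjMatrix, hreg.trace_adjMatrix_mul_self, smul_eq_mul]
    ring
  have hPu := hreg.posSemidef_smul_one_sub_smul_one_add_adjMatrix hs0.le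
  refine le_trans (le_of_eq ?_) (hP.exp_neg_trace_add_le_det_one_sub (by positivity) hs1 hPu)
  rw [rpow_def_of_pos (by linarith), htr, htr2]
  congr 1
  field_simp
  ring

theorem det_mul_det_one_sub_smul_le [DecidableEq V] {x : ℝ} (hx0 : 0 ≤ x) (hx1 : x < 1)
    {M : Matrix V V ℝ} (hM : memA G x M) :
    M.det * (1 - (x / (1 + d * x)) • (1 + G.adjMatrix ℝ)).det ≤ (1 - x) ^ Fintype.card V := by
  have h1x : 0 < 1 - x := by linarith
  set s := x / (1 + d * x)
  have hs1 : (d + 1) * s ≤ 1 := by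
    rw [← sub_nonneg, show 1 - (d + 1) * s = (1 - x) / (1 + d * x) by
      simp only [s]; field_simp; ring]
    positivity
  set B := (1 - x)⁻¹ • (1 - s • (1 + G.adjMatrix ℝ))
  have hB : B.PosSemidef := by
    have h := (PosSemidef.one.smul (sub_nonneg.2 hs1)).add
      (hreg.posSemidef_smul_one_sub_smul_one_add_adjMatrix (by positivity : 0 ≤ s))
    rw [sub_smul, one_smul, sub_add_sub_cancel] at h
    exact h.smul (by positivity)
  have htrace : (B * M).trace = Fintype.card V := by
    have hM1 : M.trace = Fintype.card V := by simp [trace, hM.2.1]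
    simp only [B, smul_mul, sub_mul, add_mul, one_mul, trace_smul, trace_sub, trace_add,
      hreg.trace_adjMatrix_mul hM.2.2, hM1, smul_eq_mul, s]
    field_simp
  have h := hM.1.posSemidef.det_mul_det_le_exp_trace hB
  rwa [htrace, sub_self, exp_zero, det_smul, inv_pow, mul_left_comm,
    inv_mul_le_iff₀ (by positivity), mul_one] at h

end SimpleGraph.IsRegularOfDegree

theorem det_le_of_memA {V : Type*} [Fintype V] [DecidableEq V] {G : SimpleGraph V}
    [DecidableRel G.Adj] {d : ℕ} (hreg : G.IsRegularOfDegree d) {x : ℝ} (hx0 : 0 < x)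
    (hx1 : x < 1) {M : Matrix V V ℝ} (hM : memA G x M) :
    M.det ≤ ((1 - x) ^ d * (1 + d * x)) ^ ((Fintype.card V : ℝ) / (d + 1)) := by
  have h1x : 0 < 1 - x := by linarith
  set s := x / (1 + d * x)
  set z := (Fintype.card V : ℝ) / (d + 1)
  have hu : 1 - (d + 1) * s = (1 - x) / (1 + d * x) := by
    simp only [s]; field_simp; ring
  have hs1 : (d + 1) * s < 1 := by
    have : 0 < 1 - (d + 1) * s := hu ▸ by positivity
    linarith
  have hdet := hreg.rpow_le_det_one_sub_smul (by positivity) hs1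
  rw [hu] at hdet
  have hbalance : ((1 - x) ^ d * (1 + d * x)) ^ z * ((1 - x) / (1 + d * x)) ^ z =
      (1 - x) ^ Fintype.card V := by
    rw [← mul_rpow (by positivity) (by positivity),
      show (1 - x) ^ d * (1 + d * x) * ((1 - x) / (1 + d * x)) = (1 - x) ^ (d + 1) by
        field_simp; ring,
      ← rpow_natCast (1 - x) (d + 1), ← rpow_mul h1x.le,
      show ((d + 1 : ℕ) : ℝ) * z = Fintype.card V by simp only [z]; push_cast; field_simp,
      rpow_natCast]
  refine le_of_mul_le_mul_right ?_ (by positivity : 0 < ((1 - x) / (1 + d * x)) ^ z)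
  calc M.det * ((1 - x) / (1 + d * x)) ^ z
      ≤ M.det * (1 - s • (1 + G.adjMatrix ℝ)).det :=
        mul_le_mul_of_nonneg_left hdet hM.1.det_pos.le
    _ ≤ (1 - x) ^ Fintype.card V := hreg.det_mul_det_one_sub_smul_le hx0.le hx1 hM
    _ = _ := hbalance.symm

theorem det_eq_of_memA_top {d : ℕ} {x : ℝ} (hx : x ≠ 1)
    {M : Matrix (Fin (d + 1)) (Fin (d + 1)) ℝ} (hM : memA ⊤ x M) :
    M.det = (1 - x) ^ d * (1 + d * x) := by
  have h1x : 1 - x ≠ 0 := sub_ne_zero.2 hx.symm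
  have hM' : M = (1 - x) • (1 + vecMulVec (fun _ => x / (1 - x)) (fun _ => 1)) := by
    ext i j
    rcases eq_or_ne i j with rfl | hij
    · simp only [hM.2.1, Matrix.smul_apply, Matrix.add_apply, one_apply_eq, vecMulVec_apply,
        mul_one, smul_eq_mul]
      field_simp
      ring
    · simp only [hM.2.2 i j hij, Matrix.smul_apply, Matrix.add_apply, one_apply_ne hij,
        vecMulVec_apply, mul_one, smul_eq_mul, zero_add]
      field_simp
  rw [hM', det_smul, vecMulVec_eq (Fin 1), det_one_add_replicateCol_mul_replicateRow,
    Fintype.card_fin, pow_succ]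
  simp only [dotProduct, one_mul, sum_const, card_univ, Fintype.card_fin, nsmul_eq_mul,
    Nat.cast_add, Nat.cast_one]
  field_simp
  ring

theorem statement_16_general {V : Type*} [Fintype V] [Nonempty V] [DecidableEq V]
    (d : ℕ)
    (G : SimpleGraph V) [DecidableRel G.Adj] (hreg : G.IsRegularOfDegree d)
    (x : ℝ) (hx : x ∈ Set.Ioo (0 : ℝ) 1)
    (A : Matrix V V ℝ) (hA : IsMaxA G x A)
    (A' : Matrix (Fin (d + 1)) (Fin (d + 1)) ℝ)
    (hA' : IsMaxA (⊤ : SimpleGraph (Fin (d + 1))) x A') :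
    A.det ^ ((1 : ℝ) / Fintype.card V) ≤ A'.det ^ ((1 : ℝ) / (d + 1)) := by
  obtain ⟨hx0, hx1⟩ := hx
  have hτ : 0 < (1 - x) ^ d * (1 + d * x) := by
    have : 0 < 1 - x := by linarith
    positivity
  rw [det_eq_of_memA_top hx1.ne hA'.1]
  calc A.det ^ ((1 : ℝ) / Fintype.card V)
      ≤ (((1 - x) ^ d * (1 + d * x)) ^ ((Fintype.card V : ℝ) / (d + 1))) ^
          ((1 : ℝ) / Fintype.card V) :=
        rpow_le_rpow hA.1.1.posSemidef.det_nonneg (det_le_of_memA hreg hx0 hx1 hA.1)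
          (by positivity)
    _ = ((1 - x) ^ d * (1 + d * x)) ^ ((1 : ℝ) / (d + 1)) := by
        rw [← rpow_mul hτ.le]
        field_simp

theorem statement_16 {V : Type*} [Fintype V] [Nonempty V] [DecidableEq V]
    (d : ℕ) (hd : 1 ≤ d)
    (G : SimpleGraph V) [DecidableRel G.Adj] (hreg : G.IsRegularOfDegree d)
    (x : ℝ) (hx : x ∈ Set.Ioo (0 : ℝ) 1)
    (A : Matrix V V ℝ) (hA : IsMaxA G x A)
    (A' : Matrix (Fin (d + 1)) (Fin (d + 1)) ℝ)
    (hA' : IsMaxA (⊤ : SimpleGraph (Fin (d + 1))) x A') :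
    A.det ^ ((1 : ℝ) / Fintype.card V) ≤ A'.det ^ ((1 : ℝ) / (d + 1)) :=
  statement_16_general d G hreg x hx A hA A' hA'
end
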